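/- Let A be a unital C*-algebra and S ⊆ A an operator system with C*(S) = A. If a unital *-representation π of A has the strong Korovkin rigidity property with respect to S, and σ is another unital *-representation of A with ker σ = ker π, then σ also has the strong Korovkin rigidity property with respect to S. -/

import Mathlib

/- Common definitions: nets, completely positive maps, operator systems,
   representations, boundary representations, tight extensions, Korovkin properties. -/

open scoped ComplexOrder

noncomputable section

/-- A nonempty directed relation, serving as the index of a net. -/
def DirectedRel {ι : Type*} (r : ι → ι → Prop) : Prop :=
  Nonempty ι ∧ (∀ i, r i i) ∧ (∀ i j k, r i j → r j k → r i k) ∧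
    ∀ i j, ∃ k, r i k ∧ r j k

/-- Norm convergence of a net indexed by a directed relation. -/
def NetTendsto {ι X : Type*} [SeminormedAddCommGroup X] (r : ι → ι → Prop)
    (f : ι → X) (x : X) : Prop :=
  ∀ ε : ℝ, 0 < ε → ∃ i₀, ∀ i, r i₀ i → ‖f i - x‖ < ε

/-- Weak convergence of a net in a normed space: convergence against every
continuous linear functional. -/
def WeakNetTendsto {ι : Type*} {X : Type*} [NormedAddCommGroup X] [NormedSpace ℂ X]
    (r : ι → ι → Prop) (f : ι → X) (x : X) : Prop :=
  ∀ φ : StrongDual ℂ X, ∀ ε : ℝ, 0 < ε → ∃ i₀, ∀ i, r i₀ i → ‖φ (f i) - φ x‖ < ε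

/-- A positive matrix over a unital C*-algebra: one of the form `star b * b`. -/
def MatPos {R : Type*} [Ring R] [StarRing R] {n : ℕ}
    (m : Matrix (Fin n) (Fin n) R) : Prop :=
  ∃ b : Matrix (Fin n) (Fin n) R, m = star b * b

/-- A unital completely positive map between unital star algebras (intended:
unital C*-algebras). -/
def IsUCP {A B : Type*} [Ring A] [StarRing A] [Algebra ℂ A]
    [Ring B] [StarRing B] [Algebra ℂ B] (ψ : A →ₗ[ℂ] B) : Prop :=
  ψ 1 = 1 ∧ ∀ (n : ℕ) (m : Matrix (Fin n) (Fin n) A), MatPos m → MatPos (m.map ψ)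

/-- A unital completely positive map defined on an operator system `E ⊆ A`. -/
def IsUCPOn {A B : Type*} [Ring A] [StarRing A] [Algebra ℂ A]
    [Ring B] [StarRing B] [Algebra ℂ B] (E : Submodule ℂ A) (ψ : ↥E →ₗ[ℂ] B) : Prop :=
  (∃ h1 : (1 : A) ∈ E, ψ ⟨1, h1⟩ = 1) ∧
    ∀ (n : ℕ) (m : Matrix (Fin n) (Fin n) ↥E),
      MatPos (m.map (fun x => (x : A))) → MatPos (m.map ψ)

/-- An operator system: a unital, self-adjoint, norm-closed subspace. -/
structure IsOperatorSystem {A : Type*} [CStarAlgebra A] (S : Submodule ℂ A) : Prop where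
  one_mem : (1 : A) ∈ S
  star_mem : ∀ s ∈ S, star s ∈ S
  isClosed : IsClosed (S : Set A)

/-- `S` generates `A` as a C*-algebra: the smallest closed star subalgebra
containing `S` is all of `A`. -/
def GeneratesCStar {A : Type*} [CStarAlgebra A] (S : Submodule ℂ A) : Prop :=
  (StarAlgebra.adjoin ℂ (S : Set A)).topologicalClosure = ⊤

section Reps

variable {A : Type*} [Ring A] [StarRing A] [Algebra ℂ A]
variable {H : Type*} [NormedAddCommGroup H] [InnerProductSpace ℂ H] [CompleteSpace H]

/-- The unique extension property of a representation `π` with respect to an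
operator system `S`: the only unital completely positive map agreeing with `π`
on `S` is `π` itself. -/
def HasUEP (S : Submodule ℂ A) (π : A →⋆ₐ[ℂ] (H →L[ℂ] H)) : Prop :=
  ∀ ψ : A →ₗ[ℂ] (H →L[ℂ] H), IsUCP ψ → (∀ s ∈ S, ψ s = π s) → ∀ a, ψ a = π a

/-- An irreducible representation (on a nonzero Hilbert space): the commutant of
the range is trivial. -/
def IsIrreducibleRep (π : A →⋆ₐ[ℂ] (H →L[ℂ] H)) : Prop :=
  (∃ ξ : H, ξ ≠ 0) ∧
    ∀ T : H →L[ℂ] H, (∀ a, π a * T = T * π a) → ∃ c : ℂ, T = c • (1 : H →L[ℂ] H)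

/-- A boundary representation for `S`: an irreducible representation with the
unique extension property with respect to `S`. -/
def IsBoundaryRep (S : Submodule ℂ A) (π : A →⋆ₐ[ℂ] (H →L[ℂ] H)) : Prop :=
  IsIrreducibleRep π ∧ HasUEP S π

/-- The double commutant of a set of operators. -/
def DoubleCommutant (s : Set (H →L[ℂ] H)) : Set (H →L[ℂ] H) :=
  Set.centralizer (Set.centralizer s)

/-- The unique tight extension property: the only unital completely positive map
`ψ : A → π(A)''` agreeing with `π` on `S` is `π` itself. -/
def HasUniqueTightExt (S : Submodule ℂ A) (π : A →⋆ₐ[ℂ] (H →L[ℂ] H)) : Prop :=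
  ∀ ψ : A →ₗ[ℂ] (H →L[ℂ] H), IsUCP ψ →
    (∀ a, ψ a ∈ DoubleCommutant (Set.range ⇑π)) →
    (∀ s ∈ S, ψ s = π s) → ∀ a, ψ a = π a

/-- The strong Korovkin rigidity property of `π` with respect to `S`: every net of
unital completely positive maps `A → π(A)` converging to `π` in norm pointwise on `S`
converges to `π` in norm pointwise on `A`. -/
def StrongKorovkin (S : Submodule ℂ A) (π : A →⋆ₐ[ℂ] (H →L[ℂ] H)) : Prop :=
  ∀ (ι : Type) (r : ι → ι → Prop), DirectedRel r →
    ∀ ψ : ι → (A →ₗ[ℂ] (H →L[ℂ] H)), (∀ i, IsUCP (ψ i)) →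
      (∀ i a, ψ i a ∈ Set.range ⇑π) →
      (∀ s ∈ S, NetTendsto r (fun i => ψ i s) (π s)) →
      ∀ a, NetTendsto r (fun i => ψ i a) (π a)

/-- The (weak) Korovkin rigidity property of `π` with respect to `S`: every net of
unital completely positive maps `A → π(A)` converging to `π` weakly pointwise on `S`
converges to `π` weakly pointwise on `A`. -/
def WeakKorovkin (S : Submodule ℂ A) (π : A →⋆ₐ[ℂ] (H →L[ℂ] H)) : Prop :=
  ∀ (ι : Type) (r : ι → ι → Prop), DirectedRel r →
    ∀ ψ : ι → (A →ₗ[ℂ] (H →L[ℂ] H)), (∀ i, IsUCP (ψ i)) →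
      (∀ i a, ψ i a ∈ Set.range ⇑π) →
      (∀ s ∈ S, WeakNetTendsto r (fun i => ψ i s) (π s)) →
      ∀ a, WeakNetTendsto r (fun i => ψ i a) (π a)

end Reps

/-- The (weak) Korovkin rigidity property of the identity representation of `A`. -/
def WeakKorovkinId {A : Type*} [CStarAlgebra A] (S : Submodule ℂ A) : Prop :=
  ∀ (ι : Type) (r : ι → ι → Prop), DirectedRel r →
    ∀ ψ : ι → (A →ₗ[ℂ] A), (∀ i, IsUCP (ψ i)) →
      (∀ s ∈ S, WeakNetTendsto r (fun i => ψ i s) s) →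
      ∀ a, WeakNetTendsto r (fun i => ψ i a) a

/-- The strong Korovkin rigidity property of the identity representation of `A`. -/
def StrongKorovkinId {A : Type*} [CStarAlgebra A] (S : Submodule ℂ A) : Prop :=
  ∀ (ι : Type) (r : ι → ι → Prop), DirectedRel r →
    ∀ ψ : ι → (A →ₗ[ℂ] A), (∀ i, IsUCP (ψ i)) →
      (∀ s ∈ S, NetTendsto r (fun i => ψ i s) s) →
      ∀ a, NetTendsto r (fun i => ψ i a) a

/-- A state on a unital star algebra, as a bare function (positive linear
functionals on a C*-algebra are automatically continuous). -/
def IsStateFun {B : Type*} [Ring B] [StarRing B] [Algebra ℂ B] (ω : B → ℂ) : Prop :=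
  (∀ x y, ω (x + y) = ω x + ω y) ∧ (∀ (c : ℂ) (x), ω (c • x) = c * ω x) ∧
    ω 1 = 1 ∧ ∀ x, 0 ≤ ω (star x * x)

/-- A pure state: an extreme point of the state space. -/
def IsPureStateFun {B : Type*} [Ring B] [StarRing B] [Algebra ℂ B] (ω : B → ℂ) : Prop :=
  IsStateFun ω ∧ ∀ φ₁ φ₂ : B → ℂ, IsStateFun φ₁ → IsStateFun φ₂ →
    ∀ c : ℝ, 0 < c → c < 1 →
      (∀ x, ω x = (c : ℂ) * φ₁ x + ((1 : ℂ) - (c : ℂ)) * φ₂ x) → φ₁ = ω ∧ φ₂ = ω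

end


/-!
Since `ker σ = ker π`, the assignment `σ a ↦ π a` is a well-defined linear map `σ(A) → π(A)`, and it
is isometric and completely positive: for a *-homomorphism `φ` of C⋆-algebras, `0 ≤ φ a` holds iff
`φ` kills the negative part of the real part of `a`, and `‖φ (a⋆a)‖ ≤ r` iff `0 ≤ φ (r - a⋆a)`, so
positivity and norms (also of matrices, via the amplifications) are determined by the kernel.
Following a net of UCP maps into `σ(A)` by this map gives a net of UCP maps into `π(A)` which is
exactly as far from `π` as the original net is from `σ`.
-/

open scoped CStarAlgebra ComplexStarModule

lemma NonUnitalStarAlgHom.map_negPart {A B : Type*} [NonUnitalCStarAlgebra A]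
    [NonUnitalCStarAlgebra B] (φ : A →⋆ₙₐ[ℂ] B) {a : A} (ha : IsSelfAdjoint a) :
    φ a⁻ = (φ a)⁻ :=
  φ.map_cfcₙ _ a (ha := ha) (hφa := ha.map φ)

lemma NonUnitalStarAlgHom.nonneg_of_ker_le {A B C : Type*} [NonUnitalCStarAlgebra A]
    [NonUnitalCStarAlgebra B] [PartialOrder B] [StarOrderedRing B]
    [NonUnitalCStarAlgebra C] [PartialOrder C] [StarOrderedRing C]
    {φ : A →⋆ₙₐ[ℂ] B} {ψ : A →⋆ₙₐ[ℂ] C}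
    (hker : ∀ a, φ a = 0 → ψ a = 0) {a : A} (ha : 0 ≤ φ a) : 0 ≤ ψ a := by
  have hφa : IsSelfAdjoint (φ a) := .of_nonneg ha
  have hψa : IsSelfAdjoint (ψ a) := by
    have : ψ (a - star a) = 0 := hker _ (by rw [map_sub, map_star, hφa.star_eq, sub_self])
    rwa [map_sub, map_star, sub_eq_zero, eq_comm] at this
  have hneg : ψ (ℜ a : A)⁻ = 0 := hker _ <| by
    rw [φ.map_negPart (ℜ a).2, map_realPart, hφa.coe_realPart, CFC.negPart_eq_zero_iff _ hφa]
    exact ha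
  rwa [ψ.map_negPart (ℜ a).2, map_realPart, hψa.coe_realPart,
    CFC.negPart_eq_zero_iff _ hψa] at hneg

lemma StarAlgHom.map_algebraMap_real {A B : Type*} [CStarAlgebra A] [CStarAlgebra B]
    (φ : A →⋆ₐ[ℂ] B) (r : ℝ) : φ (algebraMap ℝ A r) = algebraMap ℝ B r :=
  ((φ : A →ₐ[ℂ] B).restrictScalars ℝ).commutes r

lemma StarAlgHom.norm_apply_le_of_ker_le {A B C : Type*} [CStarAlgebra A]
    [CStarAlgebra B] [PartialOrder B] [StarOrderedRing B]
    [CStarAlgebra C] [PartialOrder C] [StarOrderedRing C]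
    {φ : A →⋆ₐ[ℂ] B} {ψ : A →⋆ₐ[ℂ] C}
    (hker : ∀ a, φ a = 0 → ψ a = 0) (a : A) : ‖ψ a‖ ≤ ‖φ a‖ := by
  set r := ‖φ (star a * a)‖
  have hφ : 0 ≤ φ (algebraMap ℝ A r - star a * a) := by
    rw [map_sub, sub_nonneg, φ.map_algebraMap_real]
    exact ((IsSelfAdjoint.star_mul_self a).map φ).le_algebraMap_norm_self
  have hψ : 0 ≤ ψ (algebraMap ℝ A r - star a * a) :=
    (φ : A →⋆ₙₐ[ℂ] B).nonneg_of_ker_le (ψ := (ψ : A →⋆ₙₐ[ℂ] C)) hker hφ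
  rw [map_sub, sub_nonneg, ψ.map_algebraMap_real] at hψ
  have hsq : ‖ψ (star a * a)‖ ≤ ‖φ (star a * a)‖ :=
    (CStarAlgebra.norm_le_iff_le_algebraMap _ (norm_nonneg _)
      (by rw [map_mul, map_star]; exact star_mul_self_nonneg (ψ a))).mpr hψ
  rw [map_mul, map_mul, map_star, map_star, CStarRing.norm_star_mul_self,
    CStarRing.norm_star_mul_self] at hsq
  exact (mul_self_le_mul_self_iff (norm_nonneg _) (norm_nonneg _)).mpr hsq

lemma matPos_iff_nonneg {B : Type*} [CStarAlgebra B] [PartialOrder B] [StarOrderedRing B]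
    {n : ℕ} (m : Matrix (Fin n) (Fin n) B) : MatPos m ↔ 0 ≤ CStarMatrix.ofMatrix m := by
  -- Used through an abstract C⋆-algebra: on `CStarMatrix` the `ℝ`-module found by instance search
  -- is not reducibly equal to the one induced by the C⋆-algebra structure.
  have key : ∀ {D : Type _} [NonUnitalCStarAlgebra D] [PartialOrder D] [StarOrderedRing D]
      (d : D), 0 ≤ d ↔ ∃ b, d = star b * b := fun _ => CStarAlgebra.nonneg_iff_eq_star_mul_self
  exact (key (CStarMatrix.ofMatrix m)).symm

lemma MatPos.map_of_ker_le {A B C : Type*} [NonUnitalCStarAlgebra A]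
    [CStarAlgebra B] [PartialOrder B] [StarOrderedRing B]
    [CStarAlgebra C] [PartialOrder C] [StarOrderedRing C]
    {φ : A →⋆ₙₐ[ℂ] B} {ψ : A →⋆ₙₐ[ℂ] C}
    (hker : ∀ a, φ a = 0 → ψ a = 0) {n : ℕ} {m : Matrix (Fin n) (Fin n) A}
    (hm : MatPos (m.map φ)) : MatPos (m.map ψ) := by
  -- any C⋆-order on `A` serves to make matrices over `A` a C⋆-algebra
  let _ := CStarAlgebra.spectralOrder A
  let _ := CStarAlgebra.spectralOrderedRing A
  rw [matPos_iff_nonneg] at hm ⊢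
  refine (CStarMatrix.mapₙₐ φ).nonneg_of_ker_le (ψ := CStarMatrix.mapₙₐ ψ) (fun M hM => ?_)
    (a := CStarMatrix.ofMatrix m) hm
  ext i j
  exact hker _ (congrArg (· i j) hM)

namespace LinearMap

variable {R E M N P : Type*} [Ring R] [AddCommGroup E] [Module R E] [AddCommGroup M] [Module R M]
  [AddCommGroup N] [Module R N] [AddCommGroup P] [Module R P]

noncomputable def liftAlongKer (f : M →ₗ[R] N) (g : M →ₗ[R] P) (h : ker f ≤ ker g)
    (ψ : E →ₗ[R] N) (hψ : ∀ x, ψ x ∈ range f) : E →ₗ[R] P :=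
  (ker f).liftQ g h ∘ₗ f.quotKerEquivRange.symm.toLinearMap ∘ₗ ψ.codRestrict _ hψ

lemma liftAlongKer_apply {f : M →ₗ[R] N} {g : M →ₗ[R] P} {h : ker f ≤ ker g} {ψ : E →ₗ[R] N}
    {hψ : ∀ x, ψ x ∈ range f} {x : E} {a : M} (ha : f a = ψ x) :
    liftAlongKer f g h ψ hψ x = g a := by
  have : ψ.codRestrict _ hψ x = ⟨f a, mem_range_self f a⟩ := Subtype.ext ha.symm
  simp [liftAlongKer, this, quotKerEquivRange_symm_apply_image]

end LinearMap

lemma IsUCP.liftAlongKer {E A B C : Type*} [Ring E] [StarRing E] [Algebra ℂ E] [CStarAlgebra A]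
    [CStarAlgebra B] [PartialOrder B] [StarOrderedRing B]
    [CStarAlgebra C] [PartialOrder C] [StarOrderedRing C]
    {σ : A →⋆ₐ[ℂ] B} {π : A →⋆ₐ[ℂ] C}
    {hker : LinearMap.ker (σ : A →ₗ[ℂ] B) ≤ LinearMap.ker (π : A →ₗ[ℂ] C)}
    {ψ : E →ₗ[ℂ] B} {hψ : ∀ x, ψ x ∈ LinearMap.range (σ : A →ₗ[ℂ] B)} (h : IsUCP ψ) :
    IsUCP (LinearMap.liftAlongKer (σ : A →ₗ[ℂ] B) (π : A →ₗ[ℂ] C) hker ψ hψ) := by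
  refine ⟨?_, fun n m hm => ?_⟩
  · exact (LinearMap.liftAlongKer_apply (a := 1) (by simp [h.1])).trans (map_one π)
  · choose L hL using fun k l => hψ (m k l)
    have hσ : m.map ψ = (Matrix.of L).map σ := by ext k l; exact (hL k l).symm
    have hπ : m.map (LinearMap.liftAlongKer (σ : A →ₗ[ℂ] B) (π : A →ₗ[ℂ] C) hker ψ hψ) =
        (Matrix.of L).map π := by
      ext k l; exact LinearMap.liftAlongKer_apply (h := hker) (hL k l)
    rw [hπ]
    exact MatPos.map_of_ker_le (φ := (σ : A →⋆ₙₐ[ℂ] B)) (ψ := (π : A →⋆ₙₐ[ℂ] C))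
      (fun a ha => hker ha) (hσ ▸ h.2 n m hm)

lemma NetTendsto.of_norm_sub_le {ι X Y : Type*} [SeminormedAddCommGroup X]
    [SeminormedAddCommGroup Y] {r : ι → ι → Prop} {f : ι → X} {x : X} {g : ι → Y} {y : Y}
    (hg : NetTendsto r g y) (h : ∀ i, ‖f i - x‖ ≤ ‖g i - y‖) : NetTendsto r f x :=
  fun ε hε => (hg ε hε).imp fun _ hi i hri => (h i).trans_lt (hi i hri)

theorem stmt_12_general {A : Type} [CStarAlgebra A]
    (S : Submodule ℂ A)
    {H : Type} [NormedAddCommGroup H] [InnerProductSpace ℂ H] [CompleteSpace H]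
    {H' : Type} [NormedAddCommGroup H'] [InnerProductSpace ℂ H'] [CompleteSpace H']
    (π : A →⋆ₐ[ℂ] (H →L[ℂ] H)) (σ : A →⋆ₐ[ℂ] (H' →L[ℂ] H'))
    (hker : ∀ a : A, σ a = 0 ↔ π a = 0)
    (hπ : StrongKorovkin S π) :
    StrongKorovkin S σ := by
  intro ι r hr ψ hψ hrange hψS a
  have hσπ : LinearMap.ker (σ : A →ₗ[ℂ] H' →L[ℂ] H') ≤ LinearMap.ker (π : A →ₗ[ℂ] H →L[ℂ] H) :=
    fun a ha => (hker a).1 ha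
  have hnorm (x : A) : ‖σ x‖ = ‖π x‖ :=
    le_antisymm (StarAlgHom.norm_apply_le_of_ker_le (fun a => (hker a).2) x)
      (StarAlgHom.norm_apply_le_of_ker_le (fun a => (hker a).1) x)
  let φ i := LinearMap.liftAlongKer _ _ hσπ (ψ i) (hrange i)
  have hφ {i : ι} {x b : A} (hb : σ b = ψ i x) : φ i x = π b :=
    LinearMap.liftAlongKer_apply (f := (σ : A →ₗ[ℂ] H' →L[ℂ] H')) hb
  have hdist (i : ι) (x : A) : ‖φ i x - π x‖ = ‖ψ i x - σ x‖ := by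
    obtain ⟨b, hb⟩ := hrange i x
    rw [hφ hb, ← hb, ← map_sub, ← map_sub, hnorm]
  have hφrange (i : ι) (x : A) : φ i x ∈ Set.range π := by
    obtain ⟨b, hb⟩ := hrange i x
    exact ⟨b, (hφ hb).symm⟩
  exact (hπ ι r hr φ (fun i => (hψ i).liftAlongKer) hφrange
    (fun s hs => (hψS s hs).of_norm_sub_le fun i => (hdist i s).le) a).of_norm_sub_le
    fun i => (hdist i a).ge

/-- If `π` has the strong Korovkin rigidity property with respect
to `S` and `σ` is another unital *-representation with `ker σ = ker π`, then `σ`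
also has the strong Korovkin rigidity property with respect to `S`. -/
theorem stmt_12 {A : Type} [CStarAlgebra A]
    (S : Submodule ℂ A) (hS : IsOperatorSystem S) (hgen : GeneratesCStar S)
    {H : Type} [NormedAddCommGroup H] [InnerProductSpace ℂ H] [CompleteSpace H]
    {H' : Type} [NormedAddCommGroup H'] [InnerProductSpace ℂ H'] [CompleteSpace H']
    (π : A →⋆ₐ[ℂ] (H →L[ℂ] H)) (σ : A →⋆ₐ[ℂ] (H' →L[ℂ] H'))
    (hker : ∀ a : A, σ a = 0 ↔ π a = 0)
    (hπ : StrongKorovkin S π) :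
    StrongKorovkin S σ :=
  stmt_12_general S π σ hker hπ
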